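/- arXiv:2410.03637 — 4 statements merged into one kernel-verified Lean document; each statement's English description precedes it below -/
import Mathlib

section
/- Let M ≥ 1 and let Q be an M×M real matrix with non-negative entries and unit row sums (a stochastic matrix) that is irreducible, i.e. for all states i, j there exists n ≥ 1 with (Q^n)_{i,j} > 0. Let 0 < p_s < 1 and p_f = 1 − p_s. Define the matrix R on the product state space (Fin M) × (Fin M) by R_{(i,j),(k,l)} = Q_{i,k} · ((if l = i then p_s else 0) + (if l = j then p_f else 0)). Then R is irreducible: for every pair of states z, z′ in (Fin M) × (Fin M) there exists n ≥ 1 with (R^n)_{z,z′} > 0. -/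
theorem stmt_5 (M : ℕ) (hM : 1 ≤ M)
    (Q : Matrix (Fin M) (Fin M) ℝ)
    (hQnn : ∀ i j, 0 ≤ Q i j)
    (hQrow : ∀ i, ∑ j, Q i j = 1)
    (hQirr : ∀ i j : Fin M, ∃ n : ℕ, 1 ≤ n ∧ 0 < (Q ^ n) i j)
    (ps pf : ℝ) (hps0 : 0 < ps) (hps1 : ps < 1) (hpf : pf = 1 - ps)
    (R : Matrix (Fin M × Fin M) (Fin M × Fin M) ℝ)
    (hR : ∀ i j k l : Fin M,
      R (i, j) (k, l) = Q i k * ((if l = i then ps else 0) + (if l = j then pf else 0))) :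
    ∀ z z' : Fin M × Fin M, ∃ n : ℕ, 1 ≤ n ∧ 0 < (R ^ n) z z' := by
  have hpf0 : 0 < pf := by rw [hpf]; linarith
  have hRnn : ∀ z z' : Fin M × Fin M, 0 ≤ R z z' := by
    rintro ⟨a, b⟩ ⟨c, d⟩
    rw [hR]
    refine mul_nonneg (hQnn a c) (add_nonneg ?_ ?_) <;> split <;> linarith
  have hRpow : ∀ n (z z' : Fin M × Fin M), 0 ≤ (R ^ n) z z' := by
    intro n
    induction n with
    | zero =>
      intro z z'
      rw [pow_zero]
      by_cases h : z = z' <;> simp [Matrix.one_apply, h]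
    | succ n ih =>
      intro z z'
      rw [pow_succ, Matrix.mul_apply]
      exact Finset.sum_nonneg fun y _ => mul_nonneg (ih z y) (hRnn y z')
  have hQpow : ∀ n (i j : Fin M), 0 ≤ (Q ^ n) i j := by
    intro n
    induction n with
    | zero =>
      intro i j
      rw [pow_zero]
      by_cases h : i = j <;> simp [Matrix.one_apply, h]
    | succ n ih =>
      intro i j
      rw [pow_succ, Matrix.mul_apply]
      exact Finset.sum_nonneg fun y _ => mul_nonneg (ih i y) (hQnn y j)
  have hcomp : ∀ (m n : ℕ) (x y z : Fin M × Fin M),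
      (R ^ m) x y * (R ^ n) y z ≤ (R ^ (m + n)) x z := by
    intro m n x y z
    rw [pow_add, Matrix.mul_apply]
    exact Finset.single_le_sum (f := fun w => (R ^ m) x w * (R ^ n) w z)
      (fun w _ => mul_nonneg (hRpow m x w) (hRpow n w z)) (Finset.mem_univ y)
  -- failure paths: estimate stays j, source moves
  have hfail : ∀ n (i j k : Fin M), pf ^ n * (Q ^ n) i k ≤ (R ^ n) (i, j) (k, j) := by
    intro n
    induction n with
    | zero =>
      intro i j k
      simp only [pow_zero, one_mul, Matrix.one_apply, Prod.mk.injEq]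
      by_cases h : i = k <;> simp [h]
    | succ n ih =>
      intro i j k
      have expand : (R ^ (n + 1)) (i, j) (k, j)
          = ∑ a, ∑ b, (R ^ n) (i, j) (a, b) * R (a, b) (k, j) := by
        rw [pow_succ, Matrix.mul_apply, Fintype.sum_prod_type]
      rw [expand]
      have hQexp : (Q ^ (n + 1)) i k = ∑ a, (Q ^ n) i a * Q a k := by
        rw [pow_succ, Matrix.mul_apply]
      calc pf ^ (n + 1) * (Q ^ (n + 1)) i k
          = ∑ a, (pf ^ n * (Q ^ n) i a) * (Q a k * pf) := by
            rw [hQexp, Finset.mul_sum]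
            exact Finset.sum_congr rfl fun a _ => by ring
        _ ≤ ∑ a, ∑ b, (R ^ n) (i, j) (a, b) * R (a, b) (k, j) := by
            refine Finset.sum_le_sum fun a _ => ?_
            have h1 : (pf ^ n * (Q ^ n) i a) * (Q a k * pf)
                ≤ (R ^ n) (i, j) (a, j) * R (a, j) (k, j) := by
              refine mul_le_mul (ih i j a) ?_
                (mul_nonneg (hQnn a k) hpf0.le) (hRpow n _ _)
              rw [hR]
              have : Q a k * pf ≤ Q a k * ((if j = a then ps else 0) + pf) := by
                have hnn : (0:ℝ) ≤ (if j = a then ps else 0) := by split <;> linarith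
                nlinarith [hQnn a k]
              simpa using this
            refine le_trans h1 ?_
            exact Finset.single_le_sum
              (f := fun b => (R ^ n) (i, j) (a, b) * R (a, b) (k, j))
              (fun b _ => mul_nonneg (hRpow n _ _) (hRnn _ _)) (Finset.mem_univ j)
  rintro ⟨i, j⟩ ⟨k, l⟩
  obtain ⟨n1, hn1, hQ1⟩ := hQirr i l
  obtain ⟨k', hk'⟩ : ∃ a, 0 < Q l a := by
    by_contra h
    push_neg at h
    have : ∑ a, Q l a ≤ 0 := Finset.sum_nonpos fun a _ => h a
    rw [hQrow l] at this; linarith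
  obtain ⟨n2, hn2, hQ2⟩ := hQirr k' k
  refine ⟨n1 + (1 + n2), by omega, ?_⟩
  have h1 : 0 < (R ^ n1) (i, j) (l, j) :=
    lt_of_lt_of_le (by positivity) (hfail n1 i j l)
  have h2 : 0 < R (l, j) (k', l) := by
    rw [hR, if_pos rfl]
    have hnn : (0:ℝ) ≤ (if l = j then pf else 0) := by split <;> linarith
    have : 0 < ps + (if l = j then pf else 0) := by linarith
    exact mul_pos hk' this
  have h3 : 0 < (R ^ n2) (k', l) (k, l) :=
    lt_of_lt_of_le (by positivity) (hfail n2 k' l k)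
  have h2' : 0 < (R ^ 1) (l, j) (k', l) := by rwa [pow_one]
  have step1 : (R ^ 1) (l, j) (k', l) * (R ^ n2) (k', l) (k, l) ≤ (R ^ (1 + n2)) (l, j) (k, l) :=
    hcomp 1 n2 _ _ _
  have step2 : (R ^ n1) (i, j) (l, j) * (R ^ (1 + n2)) (l, j) (k, l)
      ≤ (R ^ (n1 + (1 + n2))) (i, j) (k, l) := hcomp n1 (1 + n2) _ _ _
  have : 0 < (R ^ n1) (i, j) (l, j) * (R ^ (1 + n2)) (l, j) (k, l) :=
    mul_pos h1 (lt_of_lt_of_le (mul_pos h2' h3) step1)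
  linarith
end

section
/- Fix M ∈ ℕ and distinct indices i ≠ j in Fin M. Let Q : Fin M → Fin M → ℝ with Q i i ≥ 0, let p_s ∈ ℝ with 0 ≤ p_s and p_f = 1 − p_s, let λ ∈ ℝ, let c : ℕ → ℝ, and let h : Fin M × Fin M × ℕ → ℝ such that δ ↦ h(i,j,δ) is nondecreasing. Define, for δ ∈ ℕ: f0(δ) = c(δ) + Q i i · h(i,j,δ+1) + Q i j · h(j,j,0) + ∑_{k ≠ i, k ≠ j} Q i k · h(k,j,1), and f1(δ) = c(δ) + λ + Q i i · p_s · h(i,i,0) + ∑_{k ≠ i} Q i k · p_s · h(k,i,1) + Q i i · p_f · h(i,j,δ+1) + Q i j · p_f · h(j,j,0) + ∑_{k ≠ i, k ≠ j} Q i k · p_f · h(k,j,1). Then the set {δ ∈ ℕ | f1(δ) ≤ f0(δ)} is an upper set: if f1(δ) ≤ f0(δ) and δ ≤ δ′, then f1(δ′) ≤ f0(δ′). -/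
theorem stmt_7 (M : ℕ) (i j : Fin M) (hij : i ≠ j)
    (Q : Fin M → Fin M → ℝ) (hQii : 0 ≤ Q i i)
    (ps pf : ℝ) (hps : 0 ≤ ps) (hpf : pf = 1 - ps)
    (lam : ℝ) (c : ℕ → ℝ) (h : Fin M × Fin M × ℕ → ℝ)
    (hmono : Monotone (fun δ : ℕ => h (i, j, δ)))
    (f0 f1 : ℕ → ℝ)
    (hf0 : ∀ δ : ℕ, f0 δ = c δ + Q i i * h (i, j, δ + 1) + Q i j * h (j, j, 0)
      + ∑ k ∈ Finset.univ.filter (fun k => k ≠ i ∧ k ≠ j), Q i k * h (k, j, 1))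
    (hf1 : ∀ δ : ℕ, f1 δ = c δ + lam + Q i i * ps * h (i, i, 0)
      + (∑ k ∈ Finset.univ.filter (fun k => k ≠ i), Q i k * ps * h (k, i, 1))
      + Q i i * pf * h (i, j, δ + 1) + Q i j * pf * h (j, j, 0)
      + ∑ k ∈ Finset.univ.filter (fun k => k ≠ i ∧ k ≠ j), Q i k * pf * h (k, j, 1)) :
    ∀ δ δ' : ℕ, f1 δ ≤ f0 δ → δ ≤ δ' → f1 δ' ≤ f0 δ' := by
  intro δ δ' hle hdd
  have hkey : ∀ d : ℕ, f1 d - f0 d =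
      (lam + Q i i * ps * h (i, i, 0)
        + (∑ k ∈ Finset.univ.filter (fun k => k ≠ i), Q i k * ps * h (k, i, 1))
        + Q i j * (pf - 1) * h (j, j, 0)
        + ∑ k ∈ Finset.univ.filter (fun k => k ≠ i ∧ k ≠ j),
            Q i k * (pf - 1) * h (k, j, 1))
      + Q i i * (pf - 1) * h (i, j, d + 1) := by
    intro d
    rw [hf0 d, hf1 d]
    have : ∑ k ∈ Finset.univ.filter (fun k => k ≠ i ∧ k ≠ j),
        Q i k * (pf - 1) * h (k, j, 1)
      = (∑ k ∈ Finset.univ.filter (fun k => k ≠ i ∧ k ≠ j), Q i k * pf * h (k, j, 1))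
        - ∑ k ∈ Finset.univ.filter (fun k => k ≠ i ∧ k ≠ j), Q i k * h (k, j, 1) := by
      rw [← Finset.sum_sub_distrib]
      exact Finset.sum_congr rfl (fun k _ => by ring)
    rw [this]
    ring
  have hm : h (i, j, δ + 1) ≤ h (i, j, δ' + 1) := hmono (by omega)
  have hcoef : Q i i * (pf - 1) ≤ 0 := by
    have : pf - 1 = -ps := by rw [hpf]; ring
    rw [this]
    nlinarith
  have : f1 δ' - f0 δ' ≤ f1 δ - f0 δ := by
    rw [hkey δ, hkey δ']
    have := mul_le_mul_of_nonpos_left hm hcoef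
    linarith
  linarith
end

section
/- Let p, p̄, λ, D ∈ ℝ with p̄ ≥ 0, let p_s ∈ ℝ with 0 ≤ p_s and p_f = 1 − p_s, let g : ℕ → ℝ, and let h : ℕ → ℝ be nondecreasing. Define, for δ ∈ ℕ: f0(δ) = D·g(δ) + p·h(0) + p̄·h(δ+1) + (1 − p − p̄)·h(1), and f1(δ) = D·g(δ) + λ + (p̄·p_s + p·p_f)·h(0) + p̄·p_f·h(δ+1) + (1 − p̄ − p·p_f)·h(1). Then the set {δ ∈ ℕ | f1(δ) ≤ f0(δ)} is an upper set: if f1(δ) ≤ f0(δ) and δ ≤ δ′, then f1(δ′) ≤ f0(δ′). -/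
theorem stmt_9 (p pbar lam D : ℝ) (hpbar : 0 ≤ pbar)
    (ps pf : ℝ) (hps : 0 ≤ ps) (hpf : pf = 1 - ps)
    (g : ℕ → ℝ) (h : ℕ → ℝ) (hmono : Monotone h)
    (f0 f1 : ℕ → ℝ)
    (hf0 : ∀ δ : ℕ, f0 δ = D * g δ + p * h 0 + pbar * h (δ + 1)
      + (1 - p - pbar) * h 1)
    (hf1 : ∀ δ : ℕ, f1 δ = D * g δ + lam + (pbar * ps + p * pf) * h 0
      + pbar * pf * h (δ + 1) + (1 - pbar - p * pf) * h 1) :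
    ∀ δ δ' : ℕ, f1 δ ≤ f0 δ → δ ≤ δ' → f1 δ' ≤ f0 δ' := by
  intro δ δ' hle hd
  have hm : h (δ + 1) ≤ h (δ' + 1) := hmono (by omega)
  rw [hf0, hf1] at hle ⊢
  subst hpf
  nlinarith [mul_nonneg hpbar hps, mul_nonneg (mul_nonneg hpbar hps) (sub_nonneg.2 hm)]
end

section
/- Let p, p̄, λ, D ∈ ℝ with p̄ ≥ 0 and D ≥ 0, let p_s, p_f ∈ ℝ with p_f ≥ 0, let g : ℕ → ℝ be nondecreasing, and let h : ℕ → ℝ be nondecreasing. Define, for δ ∈ ℕ: f0(δ) = D·g(δ) + p·h(0) + p̄·h(δ+1) + (1 − p − p̄)·h(1), and f1(δ) = D·g(δ) + λ + (p̄·p_s + p·p_f)·h(0) + p̄·p_f·h(δ+1) + (1 − p̄ − p·p_f)·h(1). Then the function δ ↦ min(f0(δ), f1(δ)) is nondecreasing on ℕ. -/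
theorem stmt_10 (p pbar lam D : ℝ) (hpbar : 0 ≤ pbar) (hD : 0 ≤ D)
    (ps pf : ℝ) (hpf : 0 ≤ pf)
    (g : ℕ → ℝ) (hg : Monotone g)
    (h : ℕ → ℝ) (hmono : Monotone h)
    (f0 f1 : ℕ → ℝ)
    (hf0 : ∀ δ : ℕ, f0 δ = D * g δ + p * h 0 + pbar * h (δ + 1)
      + (1 - p - pbar) * h 1)
    (hf1 : ∀ δ : ℕ, f1 δ = D * g δ + lam + (pbar * ps + p * pf) * h 0
      + pbar * pf * h (δ + 1) + (1 - pbar - p * pf) * h 1) :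
    Monotone (fun δ : ℕ => min (f0 δ) (f1 δ)) := by
  intro a b hab
  have hga : D * g a ≤ D * g b := mul_le_mul_of_nonneg_left (hg hab) hD
  have hha : h (a + 1) ≤ h (b + 1) := hmono (by omega)
  have h0 : f0 a ≤ f0 b := by
    rw [hf0 a, hf0 b]
    have := mul_le_mul_of_nonneg_left hha hpbar
    linarith
  have h1 : f1 a ≤ f1 b := by
    rw [hf1 a, hf1 b]
    have := mul_le_mul_of_nonneg_left hha (mul_nonneg hpbar hpf)
    linarith
  exact min_le_min h0 h1
end
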